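/- For a < 0 < b and x ∈ (a,b) \ {0}, the Szegő function D(z) = z^α · φ((2z-a-b)/(b-a))^{-α} satisfies the jump relation D₊(x)·D₋(x) = |x|^{2α}, where D₊ and D₋ are boundary values from the upper and lower half-planes and φ(z) = z + √(z-1)√(z+1). -/

import Mathlib

/-!
Complex conjugation commutes with every principal branch involved, so the Szegő function `D`
satisfies `D(z̄) = conj (D z)` off the real axis, whence `D₋(x) = conj D₊(x)` and
`D₊(x) D₋(x) = |D₊(x)|²`. The principal square root extends continuously from the upper
half-plane to its closure, so `φ` has boundary values on `[-1, 1]`, namely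
`t + i √(1 - t) √(1 + t)`, which lie on the unit circle. Hence `|D₊(x)| = |x|^α`.
-/

open Complex ComplexConjugate Filter Topology Set
open scoped ComplexOrder

noncomputable def joukowskiInv (w : ℂ) : ℂ :=
  w + (w - 1) ^ ((1 : ℂ) / 2) * (w + 1) ^ ((1 : ℂ) / 2)

noncomputable def scaleToUnit (a b : ℝ) (z : ℂ) : ℂ := (2 * z - a - b) / (b - a)

noncomputable def szegoFunction (α a b : ℝ) (z : ℂ) : ℂ :=
  z ^ (α : ℂ) * joukowskiInv (scaleToUnit a b z) ^ (-(α : ℂ))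

namespace Complex

lemma arg_ne_pi_of_im_ne_zero {u : ℂ} (hu : u.im ≠ 0) : u.arg ≠ Real.pi :=
  slitPlane_arg_ne_pi (mem_slitPlane_iff.2 (Or.inr hu))

lemma continuousOn_cpow_inv_two : ContinuousOn (· ^ (2⁻¹ : ℂ)) {u : ℂ | 0 ≤ u.im} := by
  refine ContinuousOn.congr (f := fun u : ℂ => (√((‖u‖ + u.re) / 2) : ℂ) + √((‖u‖ - u.re) / 2) * I)
    (by fun_prop) fun u hu => ?_
  apply Complex.ext <;> simp [cpow_inv_two_re, cpow_inv_two_im_eq_sqrt (show 0 ≤ u.im from hu)]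

lemma cpow_inv_two_re_pos_im_pos {u : ℂ} (hu : 0 < u.im) :
    0 < (u ^ (2⁻¹ : ℂ)).re ∧ 0 < (u ^ (2⁻¹ : ℂ)).im := by
  have hre : |u.re| < ‖u‖ := abs_re_lt_norm.2 hu.ne'
  rw [cpow_inv_two_re, cpow_inv_two_im_eq_sqrt hu.le, Real.sqrt_pos, Real.sqrt_pos]
  constructor <;> linarith [neg_abs_le u.re, le_abs_self u.re]

end Complex

lemma im_joukowskiInv_pos {w : ℂ} (hw : 0 < w.im) : 0 < (joukowskiInv w).im := by
  obtain ⟨hre₁, him₁⟩ := cpow_inv_two_re_pos_im_pos (u := w - 1) (by simpa using hw)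
  obtain ⟨hre₂, him₂⟩ := cpow_inv_two_re_pos_im_pos (u := w + 1) (by simpa using hw)
  rw [joukowskiInv, one_div, add_im, mul_im]
  linarith [mul_pos hre₁ him₂, mul_pos him₁ hre₂]

lemma joukowskiInv_conj {w : ℂ} (hw : w.im ≠ 0) :
    joukowskiInv (conj w) = conj (joukowskiInv w) := by
  have hhalf : conj ((1 : ℂ) / 2) = 1 / 2 := by simp [map_ofNat]
  have hsub : conj w - 1 = conj (w - 1) := by simp
  have hadd : conj w + 1 = conj (w + 1) := by simp
  rw [joukowskiInv, joukowskiInv, hsub, hadd,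
    conj_cpow _ _ (arg_ne_pi_of_im_ne_zero (by simpa using hw)),
    conj_cpow _ _ (arg_ne_pi_of_im_ne_zero (by simpa using hw)), hhalf, map_add, map_mul]

lemma continuousOn_joukowskiInv : ContinuousOn joukowskiInv {w : ℂ | 0 ≤ w.im} := by
  have hsqrt {c : ℂ} (hc : c.im = 0) :
      ContinuousOn (fun w : ℂ => (w + c) ^ ((1 : ℂ) / 2)) {w : ℂ | 0 ≤ w.im} := by
    rw [one_div]
    exact continuousOn_cpow_inv_two.comp (by fun_prop) fun w (hw : 0 ≤ w.im) => by
      simpa [mem_ofPred_eq, hc] using hw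
  have h₁ := hsqrt (c := -1) (by simp)
  have h₂ := hsqrt (c := 1) (by simp)
  simp only [← sub_eq_add_neg] at h₁
  exact continuousOn_id.add (h₁.mul h₂)

lemma joukowskiInv_ofReal {t : ℝ} (ht : t ∈ Icc (-1) 1) :
    joukowskiInv t = t + (√(1 - t) * √(1 + t) : ℝ) * I := by
  have h₁ : (t : ℂ) - 1 = -((1 - t : ℝ) : ℂ) := by push_cast; ring
  have h₂ : (t : ℂ) + 1 = ((1 + t : ℝ) : ℂ) := by push_cast; ring
  have hnn₁ : (0 : ℂ) ≤ ((1 - t : ℝ) : ℂ) := zero_le_real.2 (by linarith [ht.2])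
  have hnn₂ : (0 : ℂ) ≤ ((1 + t : ℝ) : ℂ) := zero_le_real.2 (by linarith [ht.1])
  have hs₁ := Complex.sqrt_neg_of_nonneg hnn₁
  rw [Complex.sqrt_of_nonneg hnn₁] at hs₁
  have hs₂ := Complex.sqrt_of_nonneg hnn₂
  simp only [Complex.sqrt, ofReal_re] at hs₁ hs₂
  rw [joukowskiInv, one_div, h₁, h₂, hs₁, hs₂]
  push_cast
  ring

lemma norm_joukowskiInv_ofReal {t : ℝ} (ht : t ∈ Icc (-1) 1) : ‖joukowskiInv t‖ = 1 := by
  rw [joukowskiInv_ofReal ht, norm_def, normSq_add_mul_I, mul_pow,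
    Real.sq_sqrt (by linarith [ht.2]), Real.sq_sqrt (by linarith [ht.1])]
  ring_nf
  exact Real.sqrt_one

section scaleToUnit

variable {a b : ℝ}

lemma continuous_scaleToUnit : Continuous (scaleToUnit a b) := by
  unfold scaleToUnit
  fun_prop

lemma im_scaleToUnit (z : ℂ) : (scaleToUnit a b z).im = 2 * z.im / (b - a) := by
  rw [scaleToUnit, ← ofReal_sub, div_ofReal_im]
  simp

lemma scaleToUnit_conj (z : ℂ) : scaleToUnit a b (conj z) = conj (scaleToUnit a b z) := by
  simp [scaleToUnit, map_ofNat]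

lemma scaleToUnit_ofReal {x : ℝ} (hab : a < b) (hx : x ∈ Icc a b) :
    ∃ t ∈ Icc (-1 : ℝ) 1, scaleToUnit a b x = t := by
  have hba : 0 < b - a := sub_pos.2 hab
  refine ⟨(2 * x - a - b) / (b - a), ⟨?_, ?_⟩, by simp [scaleToUnit]⟩
  · rw [le_div_iff₀ hba]; linarith [hx.1]
  · rw [div_le_iff₀ hba]; linarith [hx.2]

end scaleToUnit

section szegoFunction

variable (α : ℝ) {a b : ℝ}

lemma szegoFunction_conj (hab : a < b) {z : ℂ} (hz : 0 < z.im) :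
    szegoFunction α a b (conj z) = conj (szegoFunction α a b z) := by
  have hw : 0 < (scaleToUnit a b z).im := by
    rw [im_scaleToUnit]; exact div_pos (by linarith) (by linarith)
  rw [szegoFunction, szegoFunction, scaleToUnit_conj, joukowskiInv_conj hw.ne',
    conj_cpow _ _ (arg_ne_pi_of_im_ne_zero hz.ne'),
    conj_cpow _ _ (arg_ne_pi_of_im_ne_zero (im_joukowskiInv_pos hw).ne'), map_mul, map_neg,
    conj_ofReal]

lemma norm_szegoFunction (z : ℂ) :
    ‖szegoFunction α a b z‖ = ‖z‖ ^ α * ‖joukowskiInv (scaleToUnit a b z)‖ ^ (-α) := by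
  rw [szegoFunction, norm_mul, ← ofReal_neg, norm_cpow_real, norm_cpow_real]

lemma tendsto_norm_szegoFunction (hab : a < b) {x : ℝ} (hx : x ∈ Icc a b) (hx0 : x ≠ 0) :
    Tendsto (fun z => ‖szegoFunction α a b z‖) (𝓝[{z | 0 < z.im}] (x : ℂ)) (𝓝 (|x| ^ α)) := by
  obtain ⟨t, ht, hxt⟩ := scaleToUnit_ofReal hab hx
  have hmaps : MapsTo (scaleToUnit a b) {z | 0 ≤ z.im} {w | 0 ≤ w.im} := fun z hz => by
    simp only [mem_ofPred_eq, im_scaleToUnit] at hz ⊢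
    exact div_nonneg (by linarith) (by linarith)
  have hφ : ContinuousWithinAt (fun z => joukowskiInv (scaleToUnit a b z)) {z | 0 ≤ z.im} x :=
    (continuousOn_joukowskiInv _ (hmaps (by simp))).comp
      continuous_scaleToUnit.continuousWithinAt hmaps
  have hφx : ‖joukowskiInv (scaleToUnit a b x)‖ = 1 := by
    rw [hxt, norm_joukowskiInv_ofReal ht]
  have hcont : ContinuousWithinAt
      (fun z => ‖z‖ ^ α * ‖joukowskiInv (scaleToUnit a b z)‖ ^ (-α)) {z | 0 ≤ z.im} x :=
    (continuous_norm.continuousWithinAt.rpow_const (Or.inl (by simpa using hx0))).mul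
      (hφ.norm.rpow_const (Or.inl (by simp [hφx])))
  have hsub : {z : ℂ | 0 < z.im} ⊆ {z | 0 ≤ z.im} := fun z (hz : 0 < z.im) => hz.le
  have := (hcont.mono hsub).tendsto
  rw [hφx, Real.one_rpow, mul_one, norm_real, Real.norm_eq_abs] at this
  simpa only [norm_szegoFunction] using this

end szegoFunction

instance nhdsWithin_im_pos_neBot (x : ℝ) : (𝓝[{z : ℂ | 0 < z.im}] (x : ℂ)).NeBot := by
  rw [← mem_closure_iff_nhdsWithin_neBot, closure_setOfPred_lt_im]
  simp

lemma eq_conj_of_tendsto_of_conj_symm {f : ℂ → ℂ} {x : ℝ} {p m : ℂ}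
    (hf : ∀ z, 0 < z.im → f (conj z) = conj (f z))
    (hp : Tendsto f (𝓝[{z | 0 < z.im}] (x : ℂ)) (𝓝 p))
    (hm : Tendsto f (𝓝[{z | z.im < 0}] (x : ℂ)) (𝓝 m)) :
    m = conj p := by
  have hconj : Tendsto conj (𝓝[{z | 0 < z.im}] (x : ℂ)) (𝓝[{z | z.im < 0}] (x : ℂ)) := by
    have hmaps : MapsTo conj {z : ℂ | 0 < z.im} {z | z.im < 0} := fun z hz => by
      simpa using hz
    simpa using continuous_conj.continuousWithinAt.tendsto_nhdsWithin (x := (x : ℂ)) hmaps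
  have hm' : Tendsto (fun z => f (conj z)) (𝓝[{z | 0 < z.im}] (x : ℂ)) (𝓝 (conj p)) :=
    ((continuous_conj.tendsto p).comp hp).congr' <| by
      filter_upwards [self_mem_nhdsWithin] with z hz using (hf z hz).symm
  exact tendsto_nhds_unique (hm.comp hconj) hm'

theorem szego_function_jump_general (α a b : ℝ)
    (x : ℝ) (hx : x ∈ Set.Ioo a b) (hx0 : x ≠ 0) (Dp Dm : ℂ)
    (hDp : Tendsto
      (fun z : ℂ => z ^ (α : ℂ) *
        (((2 * z - a - b) / (b - a)) +
          ((2 * z - a - b) / (b - a) - 1) ^ ((1 : ℂ) / 2) *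
          ((2 * z - a - b) / (b - a) + 1) ^ ((1 : ℂ) / 2)) ^ (-(α : ℂ)))
      (𝓝[{z : ℂ | 0 < z.im}] (x : ℂ)) (𝓝 Dp))
    (hDm : Tendsto
      (fun z : ℂ => z ^ (α : ℂ) *
        (((2 * z - a - b) / (b - a)) +
          ((2 * z - a - b) / (b - a) - 1) ^ ((1 : ℂ) / 2) *
          ((2 * z - a - b) / (b - a) + 1) ^ ((1 : ℂ) / 2)) ^ (-(α : ℂ)))
      (𝓝[{z : ℂ | z.im < 0}] (x : ℂ)) (𝓝 Dm)) :
    Dp * Dm = ((|x| ^ (2 * α) : ℝ) : ℂ) := by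
  have hab : a < b := hx.1.trans hx.2
  have hDm_eq : Dm = conj Dp := eq_conj_of_tendsto_of_conj_symm (f := szegoFunction α a b)
    (fun _ hz => szegoFunction_conj α hab hz) hDp hDm
  have hnorm : ‖Dp‖ = |x| ^ α :=
    tendsto_nhds_unique hDp.norm (tendsto_norm_szegoFunction α hab (Ioo_subset_Icc_self hx) hx0)
  rw [hDm_eq, mul_conj, normSq_eq_norm_sq, hnorm, ← Real.rpow_natCast,
    ← Real.rpow_mul (abs_nonneg x), mul_comm]
  norm_num

/-- The Szegő function `D(z) = z^α · φ((2z-a-b)/(b-a))^{-α}` satisfies the jump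
relation `D₊(x) D₋(x) = |x|^{2α}` for `x ∈ (a,b) \ {0}`. -/
theorem szego_function_jump (α a b : ℝ) (hα : -1 / 2 < α) (ha : a < 0) (hb : 0 < b)
    (x : ℝ) (hx : x ∈ Set.Ioo a b) (hx0 : x ≠ 0) (Dp Dm : ℂ)
    (hDp : Tendsto
      (fun z : ℂ => z ^ (α : ℂ) *
        (((2 * z - a - b) / (b - a)) +
          ((2 * z - a - b) / (b - a) - 1) ^ ((1 : ℂ) / 2) *
          ((2 * z - a - b) / (b - a) + 1) ^ ((1 : ℂ) / 2)) ^ (-(α : ℂ)))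
      (𝓝[{z : ℂ | 0 < z.im}] (x : ℂ)) (𝓝 Dp))
    (hDm : Tendsto
      (fun z : ℂ => z ^ (α : ℂ) *
        (((2 * z - a - b) / (b - a)) +
          ((2 * z - a - b) / (b - a) - 1) ^ ((1 : ℂ) / 2) *
          ((2 * z - a - b) / (b - a) + 1) ^ ((1 : ℂ) / 2)) ^ (-(α : ℂ)))
      (𝓝[{z : ℂ | z.im < 0}] (x : ℂ)) (𝓝 Dm)) :
    Dp * Dm = ((|x| ^ (2 * α) : ℝ) : ℂ) :=
  szego_function_jump_general α a b x hx hx0 Dp Dm hDp hDm
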